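/- Let q, m ≥ 2 be integers with gcd(m, q-1) = 1, let h ≥ 1 and u ≥ 1 be integers with q^u ≥ 2hq(6q)^h, and let m₀, m₁, m₂, m₃ be integers with q^(u-1) ≤ m₀, m₂, m₃ < q^u and 1 ≤ m₁ < q^u/(hq(6q)^h). Write t(x) = m₃x³ + m₂x² − m₁x + m₀. Then for every integer g there exists an integer k with hu + 2h + 1 ≤ k ≤ hu + 2h + m such that s_q(t(q^k)^h) ≡ g (mod m). -/

import Mathlib

open Polynomial

/-- `digitSum q n` is the sum of digits of `n` in base `q`. -/
def digitSum (q n : ℕ) : ℕ := (Nat.digits q n).sum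

/-!
Let `P = t ^ h = ∑ cᵢ Xⁱ`. Comparing `P` with `s ^ h`, where `s = m₃X³ + m₂X² + m₀` has all its
coefficients at least `q ^ (u - 1)`, the smallness of `m₁` forces `cᵢ > 0` for `i = 0` and
`2 ≤ i ≤ 3h`, while `c₁ = -h m₁ m₀ ^ (h - 1)` lies in `[-q ^ (hu), -1]`; moreover every `|cᵢ|` is
below `q ^ (hu + 2h)`. Hence for `k > hu + 2h`, borrowing one unit from the `X²` coefficient, the
base-`q ^ k` digits of `P(q ^ k)` are `c₀, q ^ k + c₁, c₂ - 1, c₃, …`, and digit sums add over such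
blocks. Only the block `q ^ k + c₁ = (q ^ (hu) + c₁) + q ^ (hu) (q ^ (k - hu) - 1)` depends on
`k`, so `s_q(t(q ^ k) ^ h) = K + (q - 1)(k - hu)` for a constant `K`. As `q - 1` is invertible
modulo `m`, `m` consecutive values of `k` hit every residue class.
-/

open Finset

theorem digitSum_add_base_pow_mul {q n a : ℕ} (hq : 1 < q) (ha : a < q ^ n) (b : ℕ) :
    digitSum q (a + q ^ n * b) = digitSum q a + digitSum q b := by
  rcases Nat.eq_zero_or_pos b with rfl | hb
  · simp [digitSum]
  have key := Nat.digits_append_zeroes_append_digits (n := a) (k := n - (q.digits a).length) hq hb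
  rw [Nat.add_sub_cancel' ((Nat.digits_length_le_iff hq a).2 ha)] at key
  simp [digitSum, ← key]

theorem digitSum_base_pow_sub_one {q : ℕ} (hq : 1 < q) (n : ℕ) :
    digitSum q (q ^ n - 1) = (q - 1) * n := by
  induction n with
  | zero => simp [digitSum]
  | succ n ih =>
    have hpos : 1 ≤ q ^ n := Nat.one_le_pow _ _ (by omega)
    have : q ^ (n + 1) - 1 = (q - 1) + q ^ 1 * (q ^ n - 1) := by
      zify [hpos, hq.le, Nat.one_le_pow (n + 1) q (by omega)]
      ring
    rw [this, digitSum_add_base_pow_mul hq (by rw [pow_one]; omega), ih, digitSum,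
      Nat.digits_of_lt q (q - 1) (by omega) (by omega)]
    simp only [List.sum_cons, List.sum_nil]
    ring

theorem digitSum_toNat_base_pow_add {q N k : ℕ} (hq : 1 < q) (hNk : N ≤ k) {c : ℤ}
    (hc : -(q : ℤ) ^ N ≤ c) (hc' : c < 0) :
    digitSum q ((q : ℤ) ^ k + c).toNat =
      digitSum q ((q : ℤ) ^ N + c).toNat + (q - 1) * (k - N) := by
  obtain ⟨a, ha⟩ : ∃ a : ℕ, (q : ℤ) ^ N + c = a := ⟨_, (Int.toNat_of_nonneg (by linarith)).symm⟩
  have ha' : a < q ^ N := by zify; linarith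
  have : (q : ℤ) ^ k + c = ((a + q ^ N * (q ^ (k - N) - 1) : ℕ) : ℤ) := by
    push_cast [Nat.one_le_pow (k - N) q (by omega)]
    rw [← ha, mul_sub, ← pow_add, Nat.add_sub_cancel' hNk]
    ring
  rw [this, ha, Int.toNat_natCast, Int.toNat_natCast, digitSum_add_base_pow_mul hq ha',
    digitSum_base_pow_sub_one hq]

theorem digitSum_sum_mul_base_pow {q K : ℕ} (hq : 1 < q) (n : ℕ) {f : ℕ → ℕ}
    (hf : ∀ i < n, f i < q ^ K) :
    digitSum q (∑ i ∈ range n, f i * (q ^ K) ^ i) = ∑ i ∈ range n, digitSum q (f i) := by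
  induction n generalizing f with
  | zero => simp [digitSum]
  | succ n ih =>
    have : ∑ i ∈ range (n + 1), f i * (q ^ K) ^ i =
        f 0 + q ^ K * ∑ i ∈ range n, f (i + 1) * (q ^ K) ^ i := by
      rw [sum_range_succ', mul_sum, add_comm]
      simp only [pow_succ, pow_zero, mul_one]
      congr 1
      exact sum_congr rfl fun i _ => by ring
    rw [this, digitSum_add_base_pow_mul hq (hf 0 (by omega)),
      ih fun i hi => hf (i + 1) (by omega), sum_range_succ' _ n, add_comm]

theorem digitSum_toNat_eval_base_pow {q k n : ℕ} (hq : 1 < q) {p : ℤ[X]} (hn : p.natDegree < n)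
    (h0 : ∀ i, 0 ≤ p.coeff i) (hlt : ∀ i, p.coeff i < (q : ℤ) ^ k) :
    digitSum q (p.eval ((q : ℤ) ^ k)).toNat = ∑ i ∈ range n, digitSum q (p.coeff i).toNat := by
  have : p.eval ((q : ℤ) ^ k) = ((∑ i ∈ range n, (p.coeff i).toNat * (q ^ k) ^ i : ℕ) : ℤ) := by
    rw [eval_eq_sum_range' hn]
    push_cast
    simp only [Int.toNat_of_nonneg (h0 _)]
  rw [this, Int.toNat_natCast, digitSum_sum_mul_base_pow hq n fun i _ => ?_]
  zify
  rw [Int.toNat_of_nonneg (h0 i)]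
  exact hlt i

theorem coeff_add_C_mul_X_sub_X_sq_one {R : Type*} [CommRing R] (p : R[X]) (M : R) :
    (p + C M * X - X ^ 2).coeff 1 = M + p.coeff 1 := by
  simp [coeff_X_pow, add_comm]

theorem coeff_add_C_mul_X_sub_X_sq_of_ne_one {R : Type*} [CommRing R] (p : R[X]) (M : R) {i : ℕ}
    (hi : i ≠ 1) : (p + C M * X - X ^ 2).coeff i = p.coeff i - if i = 2 then 1 else 0 := by
  simp [coeff_X, coeff_X_pow, eq_comm, hi]

theorem digitSum_toNat_eval_base_pow_of_borrow {q N k n : ℕ} (hq : 1 < q) (hNk : N ≤ k)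
    {p : ℤ[X]} (hn : p.natDegree < n) (h1 : -(q : ℤ) ^ N ≤ p.coeff 1) (h1' : p.coeff 1 < 0)
    (h2 : 0 < p.coeff 2) (h0 : ∀ i ≠ 1, 0 ≤ p.coeff i) (hlt : ∀ i, p.coeff i < (q : ℤ) ^ k) :
    digitSum q (p.eval ((q : ℤ) ^ k)).toNat =
      ∑ i ∈ range n, digitSum q ((p + C ((q : ℤ) ^ N) * X - X ^ 2).coeff i).toNat +
        (q - 1) * (k - N) := by
  have h2n : 2 < n := (le_natDegree_of_ne_zero h2.ne').trans_lt hn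
  have hk : (q : ℤ) ^ N ≤ (q : ℤ) ^ k := pow_le_pow_right₀ (by exact_mod_cast hq.le) hNk
  have heval : (p + C ((q : ℤ) ^ k) * X - X ^ 2).eval ((q : ℤ) ^ k) = p.eval ((q : ℤ) ^ k) := by
    simp only [eval_sub, eval_add, eval_mul, eval_C, eval_X, eval_pow]
    ring
  have hdeg : (p + C ((q : ℤ) ^ k) * X - X ^ 2).natDegree < n :=
    (natDegree_sub_le _ _).trans_lt <| max_lt ((natDegree_add_le _ _).trans_lt <|
      max_lt hn ((natDegree_C_mul_le _ _).trans_lt (by simp; omega))) (by simp; omega)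
  have hrest (M M' : ℤ) :
      ∑ i ∈ (range n).erase 1, digitSum q ((p + C M * X - X ^ 2).coeff i).toNat =
        ∑ i ∈ (range n).erase 1, digitSum q ((p + C M' * X - X ^ 2).coeff i).toNat :=
    sum_congr rfl fun i hi => by
      rw [coeff_add_C_mul_X_sub_X_sq_of_ne_one _ _ (ne_of_mem_erase hi),
        coeff_add_C_mul_X_sub_X_sq_of_ne_one _ _ (ne_of_mem_erase hi)]
  rw [← heval, digitSum_toNat_eval_base_pow hq hdeg (fun i => ?_) (fun i => ?_),
    ← add_sum_erase _ _ (mem_range.2 (by omega : 1 < n)),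
    ← add_sum_erase _ _ (mem_range.2 (by omega : 1 < n)), coeff_add_C_mul_X_sub_X_sq_one,
    coeff_add_C_mul_X_sub_X_sq_one, digitSum_toNat_base_pow_add hq hNk h1 h1',
    hrest _ ((q : ℤ) ^ N)]
  · ring
  all_goals rcases eq_or_ne i 1 with rfl | hi
  · rw [coeff_add_C_mul_X_sub_X_sq_one]; linarith
  · rw [coeff_add_C_mul_X_sub_X_sq_of_ne_one _ _ hi]
    split_ifs with hi2
    · subst hi2; linarith
    · linarith [h0 i hi]
  · rw [coeff_add_C_mul_X_sub_X_sq_one]; linarith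
  · rw [coeff_add_C_mul_X_sub_X_sq_of_ne_one _ _ hi]
    split_ifs <;> linarith [hlt i]

theorem Polynomial.coeff_one_pow {S : Type*} [CommSemiring S] (p : S[X]) (n : ℕ) :
    (p ^ n).coeff 1 = n * p.coeff 1 * p.coeff 0 ^ (n - 1) := by
  rw [← coeff_coe, Polynomial.coe_pow, PowerSeries.coeff_one_pow, coeff_coe,
    Polynomial.constantCoeff_coe]

theorem natDegree_cubic_sub_le {R : Type*} [Ring R] (a b c d : R) :
    (C d * X ^ 3 + C c * X ^ 2 - C b * X + C a).natDegree ≤ 3 := by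
  rw [sub_eq_add_neg, ← neg_mul, ← map_neg]
  exact natDegree_cubic_le

section CoeffBounds

variable {R : Type*} [CommRing R] [LinearOrder R] [IsStrictOrderedRing R]

def absCoeffSum (p : R[X]) : R := p.sum fun _ a => |a|

theorem absCoeffSum_nonneg (p : R[X]) : 0 ≤ absCoeffSum p :=
  sum_nonneg fun _ _ => abs_nonneg _

theorem absCoeffSum_C_mul_X_pow (a : R) (n : ℕ) : absCoeffSum (C a * X ^ n) = |a| := by
  rw [absCoeffSum, C_mul_X_pow_eq_monomial, sum_monomial_index _ _ (abs_zero)]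

theorem abs_coeff_mul_le {p : R[X]} {A : R} (hp : ∀ i, |p.coeff i| ≤ A) (r : R[X]) (j : ℕ) :
    |(p * r).coeff j| ≤ A * absCoeffSum r := by
  have hA : 0 ≤ A := (abs_nonneg _).trans (hp 0)
  conv_lhs => rw [r.as_sum_support_C_mul_X_pow, mul_sum, finsetSum_coeff]
  refine (abs_sum_le_sum_abs _ _).trans ?_
  rw [absCoeffSum, Polynomial.sum, mul_sum]
  refine sum_le_sum fun i _ => ?_
  rw [mul_left_comm, coeff_C_mul, coeff_mul_X_pow', abs_mul, mul_comm]
  split_ifs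
  · exact mul_le_mul_of_nonneg_right (hp _) (abs_nonneg _)
  · simpa using mul_nonneg hA (abs_nonneg _)

theorem abs_coeff_pow_le (p : R[X]) (n j : ℕ) : |(p ^ n).coeff j| ≤ absCoeffSum p ^ n := by
  induction n generalizing j with
  | zero => rw [pow_zero, pow_zero, coeff_one]; split_ifs <;> simp
  | succ n ih => rw [pow_succ, pow_succ]; exact abs_coeff_mul_le ih p j

theorem abs_coeff_le_absCoeffSum (p : R[X]) (j : ℕ) : |p.coeff j| ≤ absCoeffSum p := by
  simpa using abs_coeff_pow_le p 1 j

theorem abs_coeff_pow_succ_sub_pow_succ_le {p r : R[X]} {B : R} (hp : absCoeffSum p ≤ B)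
    (hr : absCoeffSum r ≤ B) (n j : ℕ) :
    |(p ^ (n + 1) - r ^ (n + 1)).coeff j| ≤ (n + 1) * absCoeffSum (p - r) * B ^ n := by
  induction n generalizing j with
  | zero => simpa using abs_coeff_le_absCoeffSum (p - r) j
  | succ n ih =>
    have hB : 0 ≤ B := (absCoeffSum_nonneg p).trans hp
    have hD := absCoeffSum_nonneg (p - r)
    have hsplit : p ^ (n + 2) - r ^ (n + 2) =
        (p ^ (n + 1) - r ^ (n + 1)) * p + r ^ (n + 1) * (p - r) := by
      ring
    calc |(p ^ (n + 1 + 1) - r ^ (n + 1 + 1)).coeff j|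
        ≤ |((p ^ (n + 1) - r ^ (n + 1)) * p).coeff j| + |(r ^ (n + 1) * (p - r)).coeff j| := by
          rw [hsplit, coeff_add]; exact abs_add_le _ _
      _ ≤ (n + 1) * absCoeffSum (p - r) * B ^ n * B +
            absCoeffSum r ^ (n + 1) * absCoeffSum (p - r) :=
          add_le_add ((abs_coeff_mul_le ih p j).trans (by gcongr))
            (abs_coeff_mul_le (abs_coeff_pow_le r (n + 1)) _ j)
      _ ≤ (n + 1) * absCoeffSum (p - r) * B ^ n * B + B ^ (n + 1) * absCoeffSum (p - r) := by
          gcongr; exact absCoeffSum_nonneg r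
      _ = (↑(n + 1) + 1) * absCoeffSum (p - r) * B ^ (n + 1) := by push_cast; ring

theorem coeff_mul_nonneg {p r : R[X]} (hp : ∀ i, 0 ≤ p.coeff i) (hr : ∀ i, 0 ≤ r.coeff i) (n : ℕ) :
    0 ≤ (p * r).coeff n := by
  rw [coeff_mul]
  exact sum_nonneg fun x _ => mul_nonneg (hp _) (hr _)

theorem coeff_pow_nonneg {p : R[X]} (hp : ∀ i, 0 ≤ p.coeff i) (n i : ℕ) : 0 ≤ (p ^ n).coeff i := by
  induction n generalizing i with
  | zero => rw [pow_zero, coeff_one]; split_ifs <;> simp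
  | succ n ih => rw [pow_succ]; exact coeff_mul_nonneg ih hp i

theorem coeff_mul_coeff_le_coeff_mul {p r : R[X]} (hp : ∀ i, 0 ≤ p.coeff i)
    (hr : ∀ i, 0 ≤ r.coeff i) (i j : ℕ) : p.coeff i * r.coeff j ≤ (p * r).coeff (i + j) := by
  rw [coeff_mul]
  exact single_le_sum (f := fun x => p.coeff x.1 * r.coeff x.2) (a := (i, j))
    (fun x _ => mul_nonneg (hp _) (hr _)) (mem_antidiagonal.2 rfl)

-- The exponents `j = 0 ∨ 2 ≤ j ≤ 3n` are exactly the sums of `n` elements of `{0, 2, 3}`.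
theorem pow_le_coeff_pow {p : R[X]} {L : R} (hp : ∀ i, 0 ≤ p.coeff i) (hL : 0 ≤ L)
    (h0 : L ≤ p.coeff 0) (h2 : L ≤ p.coeff 2) (h3 : L ≤ p.coeff 3) (n j : ℕ)
    (hj : j = 0 ∨ 2 ≤ j ∧ j ≤ 3 * n) : L ^ n ≤ (p ^ n).coeff j := by
  induction n generalizing j with
  | zero =>
    obtain rfl : j = 0 := by omega
    simp
  | succ n ih =>
    obtain ⟨i, e, hi, he, rfl⟩ : ∃ i e, (i = 0 ∨ 2 ≤ i ∧ i ≤ 3 * n) ∧ (e = 0 ∨ e = 2 ∨ e = 3) ∧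
        j = i + e := by
      rcases hj with rfl | ⟨hj2, hj⟩
      · exact ⟨0, 0, Or.inl rfl, Or.inl rfl, rfl⟩
      · by_cases hjn : j ≤ 3 * n
        · exact ⟨j, 0, Or.inr ⟨hj2, hjn⟩, Or.inl rfl, rfl⟩
        by_cases hjn' : j ≤ 3 * n + 2
        · exact ⟨j - 2, 2, by omega, Or.inr (Or.inl rfl), by omega⟩
        · exact ⟨j - 3, 3, by omega, Or.inr (Or.inr rfl), by omega⟩
    have hLe : L ≤ p.coeff e := by rcases he with rfl | rfl | rfl <;> assumption
    calc L ^ (n + 1) = L ^ n * L := pow_succ L n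
      _ ≤ (p ^ n).coeff i * p.coeff e := mul_le_mul (ih i hi) hLe hL (coeff_pow_nonneg hp n i)
      _ ≤ (p ^ (n + 1)).coeff (i + e) := by
          rw [pow_succ]; exact coeff_mul_coeff_le_coeff_mul (coeff_pow_nonneg hp n) hp i e

theorem coeff_pow_pos_of_absCoeffSum_sub {p r : R[X]} {B L : R} (hr : ∀ i, 0 ≤ r.coeff i)
    (hL : 0 ≤ L) (h0 : L ≤ r.coeff 0) (h2 : L ≤ r.coeff 2) (h3 : L ≤ r.coeff 3)
    (hpB : absCoeffSum p ≤ B) (hrB : absCoeffSum r ≤ B) {n : ℕ}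
    (hlt : (n + 1) * absCoeffSum (p - r) * B ^ n < L ^ (n + 1)) {j : ℕ}
    (hj : j = 0 ∨ 2 ≤ j ∧ j ≤ 3 * (n + 1)) : 0 < (p ^ (n + 1)).coeff j := by
  have hclose := abs_coeff_pow_succ_sub_pow_succ_le hpB hrB n j
  rw [coeff_sub] at hclose
  linarith [(abs_le.1 hclose).1, pow_le_coeff_pow hr hL h0 h2 h3 (n + 1) j hj]

theorem absCoeffSum_cubic (a b c d : R) :
    absCoeffSum (C d * X ^ 3 + C c * X ^ 2 - C b * X + C a) = |a| + |b| + |c| + |d| := by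
  rw [absCoeffSum, sum_over_range' _ (fun _ => abs_zero) 4
    ((natDegree_cubic_sub_le a b c d).trans_lt (by norm_num))]
  simp [sum_range_succ, coeff_X, coeff_X_pow]

theorem absCoeffSum_cubic_le {Q a b c d : R} (ha : 0 ≤ a) (ha' : a ≤ Q) (hb : 0 ≤ b) (hb' : b ≤ Q)
    (hc : 0 ≤ c) (hc' : c ≤ Q) (hd : 0 ≤ d) (hd' : d ≤ Q) :
    absCoeffSum (C d * X ^ 3 + C c * X ^ 2 - C b * X + C a) ≤ 4 * Q := by
  rw [absCoeffSum_cubic, abs_of_nonneg ha, abs_of_nonneg hb, abs_of_nonneg hc, abs_of_nonneg hd]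
  linarith

end CoeffBounds

theorem pow_mul_lt_pow_of_mul_lt {Q m : ℤ} {h u : ℕ} (hQ : 1 ≤ Q) (hm : 0 ≤ m) (hh : 1 ≤ h)
    (hu : 1 ≤ u) (H : m * (h * Q * (6 * Q) ^ h) < Q ^ u) :
    h * m * (4 * Q ^ u) ^ (h - 1) < (Q ^ (u - 1)) ^ h := by
  obtain ⟨n, rfl⟩ : ∃ n, h = n + 1 := ⟨h - 1, by omega⟩
  obtain ⟨v, rfl⟩ : ∃ v, u = v + 1 := ⟨u - 1, by omega⟩
  simp only [Nat.add_sub_cancel] at *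
  have h46 : (4 : ℤ) ^ n ≤ Q * 6 ^ (n + 1) :=
    calc (4 : ℤ) ^ n ≤ 6 ^ (n + 1) := (pow_le_pow_left₀ (by norm_num) (by norm_num) n).trans
          (pow_le_pow_right₀ (by norm_num) n.le_succ)
      _ ≤ Q * 6 ^ (n + 1) := le_mul_of_one_le_left (by positivity) hQ
  refine lt_of_mul_lt_mul_right ?_ (pow_nonneg (zero_le_one.trans hQ) (n + 1))
  push_cast at *
  calc ((n : ℤ) + 1) * m * (4 * Q ^ (v + 1)) ^ n * Q ^ (n + 1)
      = (n + 1) * m * (4 ^ n * Q ^ (n + 1)) * (Q ^ (v + 1)) ^ n := by ring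
    _ ≤ (n + 1) * m * (Q * 6 ^ (n + 1) * Q ^ (n + 1)) * (Q ^ (v + 1)) ^ n := by gcongr
    _ = m * ((n + 1) * Q * (6 * Q) ^ (n + 1)) * (Q ^ (v + 1)) ^ n := by ring
    _ < Q ^ (v + 1) * (Q ^ (v + 1)) ^ n := by gcongr
    _ = (Q ^ v) ^ (n + 1) * Q ^ (n + 1) := by ring

theorem mul_le_pow_of_mul_lt {Q m : ℤ} {h u : ℕ} (hQ : 1 ≤ Q) (hm : 0 ≤ m)
    (H : m * (h * Q * (6 * Q) ^ h) < Q ^ u) : h * m ≤ Q ^ u := by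
  refine le_trans ?_ H.le
  calc (h : ℤ) * m = h * m * 1 := (mul_one _).symm
    _ ≤ h * m * (Q * (6 * Q) ^ h) := by
        gcongr
        exact one_le_mul_of_one_le_of_one_le hQ (one_le_pow₀ (by linarith))
    _ = m * (h * Q * (6 * Q) ^ h) := by ring

theorem coeff_cubic_pow_pos {q h u : ℕ} {m₀ m₁ m₂ m₃ : ℤ} (hq : 1 < q) (hh : 1 ≤ h) (hu : 1 ≤ u)
    (hm₀ : (q : ℤ) ^ (u - 1) ≤ m₀) (hm₀' : m₀ < (q : ℤ) ^ u)
    (hm₂ : (q : ℤ) ^ (u - 1) ≤ m₂) (hm₂' : m₂ < (q : ℤ) ^ u)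
    (hm₃ : (q : ℤ) ^ (u - 1) ≤ m₃) (hm₃' : m₃ < (q : ℤ) ^ u)
    (hm₁ : 0 ≤ m₁) (hm₁' : m₁ * (h * q * (6 * q) ^ h) < (q : ℤ) ^ u)
    {j : ℕ} (hj : j = 0 ∨ 2 ≤ j ∧ j ≤ 3 * h) :
    0 < ((C m₃ * X ^ 3 + C m₂ * X ^ 2 - C m₁ * X + C m₀) ^ h).coeff j := by
  have hL : 0 ≤ (q : ℤ) ^ (u - 1) := by positivity
  have hm₁Q : m₁ ≤ (q : ℤ) ^ u := (le_mul_of_one_le_left hm₁ (by exact_mod_cast hh)).trans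
    (mul_le_pow_of_mul_lt (by exact_mod_cast hq.le) hm₁ hm₁')
  set s : ℤ[X] := C m₃ * X ^ 3 + C m₂ * X ^ 2 - C 0 * X + C m₀
  have hts : C m₃ * X ^ 3 + C m₂ * X ^ 2 - C m₁ * X + C m₀ - s = C (-m₁) * X ^ 1 := by
    simp only [s, map_neg, map_zero]; ring
  have hs (i : ℕ) :
      s.coeff i = if i = 3 then m₃ else if i = 2 then m₂ else if i = 0 then m₀ else 0 := by
    simp only [s, coeff_add, coeff_sub, coeff_C_mul_X_pow, coeff_C, map_zero, zero_mul, coeff_zero]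
    split_ifs <;> omega
  obtain ⟨n, rfl⟩ : ∃ n, h = n + 1 := ⟨h - 1, by omega⟩
  refine coeff_pow_pos_of_absCoeffSum_sub (r := s) (B := 4 * (q : ℤ) ^ u) (fun i => ?_) hL
    (by simp [hs]; linarith) (by simp [hs]; linarith) (by simp [hs]; linarith)
    (absCoeffSum_cubic_le (by linarith) hm₀'.le hm₁ hm₁Q (by linarith) hm₂'.le (by linarith)
      hm₃'.le)
    (absCoeffSum_cubic_le (by linarith) hm₀'.le le_rfl (by positivity) (by linarith) hm₂'.le
      (by linarith) hm₃'.le) ?_ hj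
  · rw [hs]; split_ifs <;> linarith
  rw [hts, absCoeffSum_C_mul_X_pow, abs_neg, abs_of_nonneg hm₁]
  simpa using pow_mul_lt_pow_of_mul_lt (by exact_mod_cast hq.le) hm₁ hh hu hm₁'

theorem abs_coeff_cubic_pow_le {q h u : ℕ} {m₀ m₁ m₂ m₃ : ℤ} (hq : 1 < q)
    (hm₀ : 0 ≤ m₀) (hm₀' : m₀ ≤ (q : ℤ) ^ u) (hm₁ : 0 ≤ m₁) (hm₁' : m₁ ≤ (q : ℤ) ^ u)
    (hm₂ : 0 ≤ m₂) (hm₂' : m₂ ≤ (q : ℤ) ^ u) (hm₃ : 0 ≤ m₃) (hm₃' : m₃ ≤ (q : ℤ) ^ u) (i : ℕ) :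
    |((C m₃ * X ^ 3 + C m₂ * X ^ 2 - C m₁ * X + C m₀) ^ h).coeff i| ≤ (q : ℤ) ^ (h * u + 2 * h) :=
  calc _ ≤ absCoeffSum (C m₃ * X ^ 3 + C m₂ * X ^ 2 - C m₁ * X + C m₀) ^ h := abs_coeff_pow_le _ h i
    _ ≤ ((q : ℤ) ^ 2 * (q : ℤ) ^ u) ^ h := by
        refine pow_le_pow_left₀ (absCoeffSum_nonneg _)
          ((absCoeffSum_cubic_le hm₀ hm₀' hm₁ hm₁' hm₂ hm₂' hm₃ hm₃').trans ?_) h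
        have : (2 : ℤ) ≤ q := by exact_mod_cast hq
        gcongr
        nlinarith
    _ = (q : ℤ) ^ (h * u + 2 * h) := by ring

theorem digitSum_eval_cubic_pow {q h u k : ℕ} {m₀ m₁ m₂ m₃ : ℤ} (hq : 1 < q) (hh : 1 ≤ h)
    (hu : 1 ≤ u) (hm₀ : (q : ℤ) ^ (u - 1) ≤ m₀) (hm₀' : m₀ < (q : ℤ) ^ u)
    (hm₂ : (q : ℤ) ^ (u - 1) ≤ m₂) (hm₂' : m₂ < (q : ℤ) ^ u)
    (hm₃ : (q : ℤ) ^ (u - 1) ≤ m₃) (hm₃' : m₃ < (q : ℤ) ^ u)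
    (hm₁ : 1 ≤ m₁) (hm₁' : m₁ * (h * q * (6 * q) ^ h) < (q : ℤ) ^ u) (hk : h * u + 2 * h + 1 ≤ k) :
    digitSum q (((C m₃ * X ^ 3 + C m₂ * X ^ 2 - C m₁ * X + C m₀).eval ((q : ℤ) ^ k)) ^ h).toNat =
      ∑ i ∈ range (3 * h + 1), digitSum q (((C m₃ * X ^ 3 + C m₂ * X ^ 2 - C m₁ * X + C m₀) ^ h +
        C ((q : ℤ) ^ (h * u)) * X - X ^ 2).coeff i).toNat + (q - 1) * (k - h * u) := by
  set t : ℤ[X] := C m₃ * X ^ 3 + C m₂ * X ^ 2 - C m₁ * X + C m₀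
  have hL : (0 : ℤ) ≤ q ^ (u - 1) := by positivity
  have hm₀pos : 0 < m₀ := lt_of_lt_of_le (by positivity) hm₀
  have hm₁Q := mul_le_pow_of_mul_lt (by exact_mod_cast hq.le) (by linarith) hm₁'
  have hpos {j : ℕ} (hj : j = 0 ∨ 2 ≤ j ∧ j ≤ 3 * h) : 0 < (t ^ h).coeff j :=
    coeff_cubic_pow_pos hq hh hu hm₀ hm₀' hm₂ hm₂' hm₃ hm₃' (by linarith) hm₁' hj
  have hdeg : (t ^ h).natDegree ≤ 3 * h :=
    mul_comm 3 h ▸ natDegree_pow_le_of_le h (natDegree_cubic_sub_le _ _ _ _)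
  have hc1 : (t ^ h).coeff 1 = -(h * m₁ * m₀ ^ (h - 1)) := by
    rw [coeff_one_pow]; simp [t, coeff_X, -eq_intCast]
  have hB : (h : ℤ) * m₁ * m₀ ^ (h - 1) ≤ (q : ℤ) ^ (h * u) :=
    calc (h : ℤ) * m₁ * m₀ ^ (h - 1) ≤ (q : ℤ) ^ u * ((q : ℤ) ^ u) ^ (h - 1) :=
          mul_le_mul hm₁Q (pow_le_pow_left₀ hm₀pos.le hm₀'.le _) (by positivity) (by positivity)
      _ = (q : ℤ) ^ (h * u) := by rw [← pow_succ', ← pow_mul, Nat.sub_add_cancel hh, mul_comm]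
  have hB' : 0 < (h : ℤ) * m₁ * m₀ ^ (h - 1) := by
    have : (0 : ℤ) < h := by exact_mod_cast hh
    have : 0 < m₁ := by linarith
    positivity
  have hlt (i : ℕ) : (t ^ h).coeff i < (q : ℤ) ^ k :=
    (le_abs_self _).trans_lt <| (abs_coeff_cubic_pow_le hq hm₀pos.le hm₀'.le (by linarith)
      ((le_mul_of_one_le_left (by linarith) (by exact_mod_cast hh)).trans hm₁Q)
      (hL.trans hm₂) hm₂'.le (hL.trans hm₃) hm₃'.le i).trans_lt
      (pow_lt_pow_right₀ (by exact_mod_cast hq) (by omega))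
  rw [← eval_pow]
  refine digitSum_toNat_eval_base_pow_of_borrow hq (by omega)
    (by omega : (t ^ h).natDegree < 3 * h + 1) (by rw [hc1]; linarith) (by rw [hc1]; linarith)
    (hpos (by omega)) (fun i hi => ?_) hlt
  by_cases hi3 : i ≤ 3 * h
  · exact (hpos (by omega)).le
  · rw [coeff_eq_zero_of_natDegree_lt (by omega)]

theorem exists_lt_add_mul_modEq {a m : ℕ} (hm : 0 < m) (ha : Nat.Coprime a m) (b g : ℤ) :
    ∃ i < m, b + a * i ≡ g [ZMOD m] := by
  have : NeZero m := ⟨hm.ne'⟩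
  let i : ZMod m := (a : ZMod m)⁻¹ * (g - b)
  refine ⟨i.val, ZMod.val_lt i, ?_⟩
  rw [← ZMod.intCast_eq_intCast_iff]
  push_cast
  rw [ZMod.natCast_zmod_val, ← mul_assoc,
    ZMod.mul_inv_of_unit _ ((ZMod.isUnit_iff_coprime a m).2 ha), one_mul]
  ring

theorem exists_mem_Ico_modEq_of_eq_add_mul {f : ℕ → ℕ} {a m K N k₀ : ℕ} (hm : 0 < m)
    (ha : Nat.Coprime a m) (hN : N ≤ k₀) (hf : ∀ k, k₀ ≤ k → f k = K + a * (k - N)) (g : ℤ) :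
    ∃ k ∈ Set.Ico k₀ (k₀ + m), (f k : ℤ) ≡ g [ZMOD m] := by
  obtain ⟨i, hi, hmod⟩ := exists_lt_add_mul_modEq hm ha (K + a * (k₀ - N) : ℕ) g
  refine ⟨k₀ + i, ⟨by omega, by omega⟩, ?_⟩
  rw [hf _ (by omega), show k₀ + i - N = k₀ - N + i by omega]
  convert hmod using 1
  push_cast
  ring

theorem exists_k_hitting_residue_general
    (q m h u : ℕ) (hq : 2 ≤ q) (hm : 2 ≤ m) (hcop : Nat.gcd m (q - 1) = 1)
    (hh : 1 ≤ h) (hu : 1 ≤ u)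
    (m₀ m₁ m₂ m₃ : ℤ)
    (hm₀ : (q : ℤ) ^ (u - 1) ≤ m₀) (hm₀' : m₀ < (q : ℤ) ^ u)
    (hm₂ : (q : ℤ) ^ (u - 1) ≤ m₂) (hm₂' : m₂ < (q : ℤ) ^ u)
    (hm₃ : (q : ℤ) ^ (u - 1) ≤ m₃) (hm₃' : m₃ < (q : ℤ) ^ u)
    (hm₁ : 1 ≤ m₁)
    (hm₁' : (m₁ : ℝ) < (q : ℝ) ^ u / ((h : ℝ) * q * (6 * q : ℝ) ^ h))
    (t : Polynomial ℤ)
    (ht : t = C m₃ * X ^ 3 + C m₂ * X ^ 2 - C m₁ * X + C m₀) :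
    ∀ g : ℤ, ∃ k : ℕ, h * u + 2 * h + 1 ≤ k ∧ k ≤ h * u + 2 * h + m ∧
      (digitSum q ((t.eval ((q : ℤ) ^ k)) ^ h).toNat : ℤ) ≡ g [ZMOD m] := by
  intro g
  subst ht
  have hm₁'' : m₁ * (h * q * (6 * q) ^ h) < (q : ℤ) ^ u := by
    have : (0 : ℝ) < h := by exact_mod_cast hh
    have : (0 : ℝ) < q := by exact_mod_cast (by omega : 0 < q)
    exact_mod_cast (lt_div_iff₀ (by positivity)).1 hm₁'
  obtain ⟨k, ⟨hk, hk'⟩, hmod⟩ := exists_mem_Ico_modEq_of_eq_add_mul (by omega)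
    (Nat.Coprime.symm hcop) (by omega : h * u ≤ h * u + 2 * h + 1)
    (fun k hk => digitSum_eval_cubic_pow hq hh hu hm₀ hm₀' hm₂ hm₂' hm₃ hm₃' hm₁ hm₁'' hk) g
  exact ⟨k, hk, by omega, hmod⟩

theorem exists_k_hitting_residue
    (q m h u : ℕ) (hq : 2 ≤ q) (hm : 2 ≤ m) (hcop : Nat.gcd m (q - 1) = 1)
    (hh : 1 ≤ h) (hu : 1 ≤ u)
    (hqu : 2 * h * q * (6 * q) ^ h ≤ q ^ u)
    (m₀ m₁ m₂ m₃ : ℤ)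
    (hm₀ : (q : ℤ) ^ (u - 1) ≤ m₀) (hm₀' : m₀ < (q : ℤ) ^ u)
    (hm₂ : (q : ℤ) ^ (u - 1) ≤ m₂) (hm₂' : m₂ < (q : ℤ) ^ u)
    (hm₃ : (q : ℤ) ^ (u - 1) ≤ m₃) (hm₃' : m₃ < (q : ℤ) ^ u)
    (hm₁ : 1 ≤ m₁)
    (hm₁' : (m₁ : ℝ) < (q : ℝ) ^ u / ((h : ℝ) * q * (6 * q : ℝ) ^ h))
    (t : Polynomial ℤ)
    (ht : t = C m₃ * X ^ 3 + C m₂ * X ^ 2 - C m₁ * X + C m₀) :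
    ∀ g : ℤ, ∃ k : ℕ, h * u + 2 * h + 1 ≤ k ∧ k ≤ h * u + 2 * h + m ∧
      (digitSum q ((t.eval ((q : ℤ) ^ k)) ^ h).toNat : ℤ) ≡ g [ZMOD m] :=
  exists_k_hitting_residue_general q m h u hq hm hcop hh hu m₀ m₁ m₂ m₃ hm₀ hm₀' hm₂ hm₂' hm₃ hm₃'
    hm₁ hm₁' t ht
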